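/- Every finitely presented DMV-algebra is semisimple. -/

import Mathlib

open scoped BigOperators

/-- The unit cube `[0,1]^n` in `ℝ^n`. -/
def Cube (n : ℕ) : Set (Fin n → ℝ) := {x | ∀ i, 0 ≤ x i ∧ x i ≤ 1}

/-- Elements of the free `n`-generated DMV-algebra `DMV_n`: continuous
`[0,1]`-valued functions on the cube that are piecewise linear with rational
coefficients, i.e. there are finitely many affine functions with rational
coefficients such that at every point `f` agrees with one of them. -/
def IsPWLQ {n : ℕ} (f : Cube n → ℝ) : Prop :=
  Continuous f ∧ (∀ x, 0 ≤ f x ∧ f x ≤ 1) ∧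
  ∃ (k : ℕ) (c : Fin k → ℚ) (a : Fin k → Fin n → ℚ),
    ∀ x : Cube n, ∃ j, f x = (c j : ℝ) + ∑ i, (a j i : ℝ) * (x : Fin n → ℝ) i

/-- Elements of the free `n`-generated MV-algebra `MV_n`: continuous
`[0,1]`-valued functions on the cube that are piecewise linear with integer
coefficients. -/
def IsPWLZ {n : ℕ} (f : Cube n → ℝ) : Prop :=
  Continuous f ∧ (∀ x, 0 ≤ f x ∧ f x ≤ 1) ∧
  ∃ (k : ℕ) (c : Fin k → ℤ) (a : Fin k → Fin n → ℤ),
    ∀ x : Cube n, ∃ j, f x = (c j : ℝ) + ∑ i, (a j i : ℝ) * (x : Fin n → ℝ) i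

/-- Ideal of `DMV_n`: a set of elements of `DMV_n` containing `0`, downward closed,
and closed under the pointwise truncated sum `f ⊕ g = min (f + g) 1`. -/
def IsIdealQ {n : ℕ} (J : Set (Cube n → ℝ)) : Prop :=
  (∀ f ∈ J, IsPWLQ f) ∧ ((fun _ => (0 : ℝ)) ∈ J) ∧
  (∀ f ∈ J, ∀ g : Cube n → ℝ, IsPWLQ g → (∀ x, g x ≤ f x) → g ∈ J) ∧
  (∀ f ∈ J, ∀ g ∈ J, (fun x => min (f x + g x) 1) ∈ J)

/-- `g` belongs to the ideal `(f]` of `DMV_n` generated by `f`. -/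
def memGen {n : ℕ} (f g : Cube n → ℝ) : Prop :=
  ∀ J : Set (Cube n → ℝ), IsIdealQ J → f ∈ J → g ∈ J

/-- Maximal ideal of `DMV_n`: a proper ideal maximal under inclusion. -/
def IsMaxIdealQ {n : ℕ} (M : Set (Cube n → ℝ)) : Prop :=
  IsIdealQ M ∧ (∃ g : Cube n → ℝ, IsPWLQ g ∧ g ∉ M) ∧
  ∀ J : Set (Cube n → ℝ), IsIdealQ J → (∃ g : Cube n → ℝ, IsPWLQ g ∧ g ∉ J) →
    M ⊆ J → J = M

/-- An MV-algebra: an abelian monoid `(A, ⊕, 0)` with an involution `*` satisfying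
the Łukasiewicz axioms. -/
class MVAlgebra (A : Type) where
  oplus : A → A → A
  star : A → A
  zero : A
  oplus_assoc : ∀ x y z : A, oplus (oplus x y) z = oplus x (oplus y z)
  oplus_comm : ∀ x y : A, oplus x y = oplus y x
  oplus_zero : ∀ x : A, oplus x zero = x
  star_star : ∀ x : A, star (star x) = x
  lukasiewicz : ∀ x y : A,
    oplus (star (oplus (star x) y)) y = oplus (star (oplus (star y) x)) x
  oplus_star_zero : ∀ x : A, oplus (star zero) x = star zero

namespace MVAlgebra

variable {A : Type} [MVAlgebra A]

/-- The MV-product `x ⊙ y = (x* ⊕ y*)*`. -/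
def odot (x y : A) : A := star (oplus (star x) (star y))

/-- `n`-fold ⊕-sum of an element. -/
def nmul : ℕ → A → A
  | 0, _ => zero
  | n + 1, x => oplus (nmul n x) x

/-- The MV-order: `x ≤ y` iff `x ⊙ y* = 0`. -/
def le (x y : A) : Prop := odot x (star y) = zero

end MVAlgebra

/-- A DMV-algebra: an MV-algebra with division operators `δ_n` (`n ≥ 1`). -/
class DMVAlgebra (A : Type) extends MVAlgebra A where
  delta : ℕ → A → A
  delta_nmul : ∀ n : ℕ, 1 ≤ n → ∀ x : A, MVAlgebra.nmul n (delta n x) = x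
  delta_odot : ∀ n : ℕ, 1 ≤ n → ∀ x : A,
    MVAlgebra.odot (delta n x) (MVAlgebra.nmul (n - 1) (delta n x)) = MVAlgebra.zero

/-- Ideal of an MV-algebra. -/
def IsMVIdeal {A : Type} [MVAlgebra A] (I : Set A) : Prop :=
  MVAlgebra.zero ∈ I ∧ (∀ x ∈ I, ∀ y : A, MVAlgebra.le y x → y ∈ I) ∧
  ∀ x ∈ I, ∀ y ∈ I, MVAlgebra.oplus x y ∈ I

/-- Maximal ideal of an MV-algebra. -/
def IsMaximalMVIdeal {A : Type} [MVAlgebra A] (I : Set A) : Prop :=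
  IsMVIdeal I ∧ I ≠ Set.univ ∧
  ∀ J : Set A, IsMVIdeal J → J ≠ Set.univ → I ⊆ J → J = I

/-- Semisimplicity: the intersection of all maximal ideals is `{0}`. -/
def IsSemisimple (A : Type) [MVAlgebra A] : Prop :=
  ∀ x : A, (∀ I : Set A, IsMaximalMVIdeal I → x ∈ I) → x = MVAlgebra.zero

/-- `π` presents the DMV-algebra `D` as the quotient of the free DMV-algebra `DMV_n`
by the ideal `J`: it is a surjective DMV-homomorphism (with respect to the pointwise
operations of `DMV_n`) whose kernel is `J`. -/
def IsQuotientByIdeal {n : ℕ} (J : Set (Cube n → ℝ)) (D : Type) [DMVAlgebra D]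
    (π : {f : Cube n → ℝ // IsPWLQ f} → D) : Prop :=
  Function.Surjective π ∧
  (∀ f g h : {f : Cube n → ℝ // IsPWLQ f},
    (∀ x, h.1 x = min (f.1 x + g.1 x) 1) → π h = MVAlgebra.oplus (π f) (π g)) ∧
  (∀ f h : {f : Cube n → ℝ // IsPWLQ f},
    (∀ x, h.1 x = 1 - f.1 x) → π h = MVAlgebra.star (π f)) ∧
  (∀ k : ℕ, 1 ≤ k → ∀ f h : {f : Cube n → ℝ // IsPWLQ f},
    (∀ x, h.1 x = f.1 x / (k : ℝ)) → π h = DMVAlgebra.delta k (π f)) ∧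
  (∀ f : {f : Cube n → ℝ // IsPWLQ f}, π f = MVAlgebra.zero ↔ f.1 ∈ J)

/-!
Write `D = DMV_n / (f₀]`. For every zero `p` of `f₀`, the elements of `DMV_n` vanishing at `p`
map onto a maximal ideal of `D`; hence if `π g` lies in every maximal ideal, then `g` vanishes on
the zero set of `f₀`. Since `f₀` and `g` are continuous and piecewise linear, the cube is cut by
the finitely many hyperplanes where two linear pieces agree into cells on each of which both
functions are affine. By Krein–Milman every cell is the convex hull of its vertices, and all
vertices lie in one finite set; at a vertex either `f₀ = g = 0` or `g / f₀` is bounded by a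
common constant `C`, and the affine inequality `g ≤ C f₀` propagates to the whole cell. Thus
`g ≤ k f₀` for some `k : ℕ`, so `g ∈ (f₀]` and `π g = 0`.
-/

open Set Filter Topology

namespace MVAlgebra

variable {A : Type} [MVAlgebra A]

theorem zero_oplus (x : A) : oplus zero x = x := by
  rw [oplus_comm]
  exact oplus_zero x

theorem oplus_one (x : A) : oplus x (star zero) = star zero := by
  rw [oplus_comm]
  exact oplus_star_zero x

theorem star_oplus_self (x : A) : oplus (star x) x = star zero := by
  have h := lukasiewicz x (star zero)
  rw [oplus_one (star x), star_star, zero_oplus, zero_oplus] at h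
  exact h.symm

theorem le_refl (x : A) : le x x := by
  rw [le, odot, star_star, star_oplus_self, star_star]

theorem le_one (x : A) : le x (star zero) := by
  rw [le, odot, star_star, oplus_one, star_star]

end MVAlgebra

open MVAlgebra in
theorem IsMVIdeal.nmul_mem {A : Type} [MVAlgebra A] {I : Set A} (hI : IsMVIdeal I) {x : A}
    (hx : x ∈ I) (k : ℕ) : nmul k x ∈ I := by
  induction k with
  | zero => exact hI.1
  | succ k ih => exact hI.2.2 _ ih _ hx

theorem IsMVIdeal.eq_univ_of_one_mem {A : Type} [MVAlgebra A] {I : Set A} (hI : IsMVIdeal I)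
    (h1 : MVAlgebra.star MVAlgebra.zero ∈ I) : I = Set.univ :=
  Set.eq_univ_of_forall fun y => hI.2.1 _ h1 y (MVAlgebra.le_one y)

section Polyhedron

variable {E : Type*} [AddCommGroup E] [Module ℝ E]

def polyhedron (L : Set (E →ᵃ[ℝ] ℝ)) : Set E := {y | ∀ ℓ ∈ L, ℓ y ≤ 0}

theorem convex_polyhedron (L : Set (E →ᵃ[ℝ] ℝ)) : Convex ℝ (polyhedron L) := by
  simp only [polyhedron, ofPred_forall]
  exact convex_iInter₂ fun ℓ _ => (convex_Iic 0).affine_preimage ℓ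

/- For `L` closed under negation, `cell L x` is the closed cell of the hyperplane arrangement
`{ℓ = 0 | ℓ ∈ L}` that contains `x` in its relative interior `openCell L x`, the set of points with
the same sign pattern as `x`. -/
def cell (L : Set (E →ᵃ[ℝ] ℝ)) (x : E) : Set E := polyhedron {ℓ ∈ L | ℓ x ≤ 0}

def openCell (L : Set (E →ᵃ[ℝ] ℝ)) (x : E) : Set E :=
  {y | ∀ ℓ ∈ L, (ℓ x ≤ 0 → ℓ y ≤ 0) ∧ (ℓ x < 0 → ℓ y < 0)}

variable {L : Set (E →ᵃ[ℝ] ℝ)} {x : E}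

theorem mem_cell_self : x ∈ cell L x := fun _ hℓ => hℓ.2

theorem mem_openCell_self : x ∈ openCell L x := fun _ _ => ⟨id, id⟩

theorem openCell_subset_cell : openCell L x ⊆ cell L x := fun _ hy ℓ hℓ => (hy ℓ hℓ.1).1 hℓ.2

theorem convex_openCell : Convex ℝ (openCell L x) := by
  intro y hy z hz a b ha hb hab ℓ hℓ
  rw [Convex.combo_affine_apply hab, smul_eq_mul, smul_eq_mul]
  refine ⟨fun hx => by nlinarith [(hy ℓ hℓ).1 hx, (hz ℓ hℓ).1 hx], fun hx => ?_⟩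
  have hy' := (hy ℓ hℓ).2 hx
  have hz' := (hz ℓ hℓ).2 hx
  rcases ha.eq_or_lt with rfl | ha
  · simp_all
  · nlinarith [mul_neg_of_pos_of_neg ha hy', mul_nonpos_of_nonneg_of_nonpos hb hz'.le]

theorem lineMap_mem_openCell {y : E} (hy : y ∈ cell L x) {t : ℝ} (ht : t ∈ Ioc 0 1) :
    AffineMap.lineMap y x t ∈ openCell L x := by
  intro ℓ hℓ
  rw [AffineMap.apply_lineMap, AffineMap.lineMap_apply_ring]
  have h1 : 0 ≤ 1 - t := by linarith [ht.2]
  constructor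
  · intro hx
    nlinarith [hy ℓ ⟨hℓ, hx⟩, ht.1]
  · intro hx
    nlinarith [hy ℓ ⟨hℓ, hx.le⟩, ht.1]

theorem cell_subset_closure_openCell [TopologicalSpace E] [IsTopologicalAddGroup E]
    [ContinuousSMul ℝ E] : cell L x ⊆ closure (openCell L x) := by
  intro y hy
  have hlim : Tendsto (AffineMap.lineMap y x) (𝓝[>] (0 : ℝ)) (𝓝 y) := by
    simpa using (AffineMap.lineMap_continuous (R := ℝ) (p := y) (q := x)).continuousWithinAt
      (s := Ioi 0) (x := 0) |>.tendsto
  exact mem_closure_of_tendsto hlim <|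
    Filter.mem_of_superset (Ioc_mem_nhdsGT zero_lt_one) fun t ht => lineMap_mem_openCell hy ht

theorem forall_eq_zero_or_forall_ne_zero_on_openCell (hL : ∀ ℓ ∈ L, -ℓ ∈ L)
    {ℓ : E →ᵃ[ℝ] ℝ} (hℓ : ℓ ∈ L) :
    (∀ y ∈ openCell L x, ℓ y = 0) ∨ ∀ y ∈ openCell L x, ℓ y ≠ 0 := by
  rcases lt_trichotomy (ℓ x) 0 with hx | hx | hx
  · exact Or.inr fun y hy => ((hy ℓ hℓ).2 hx).ne
  · refine Or.inl fun y hy => le_antisymm ((hy ℓ hℓ).1 hx.le) ?_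
    have := (hy (-ℓ) (hL ℓ hℓ)).1 (by simp [hx])
    simpa using this
  · refine Or.inr fun y hy => ?_
    have := (hy (-ℓ) (hL ℓ hℓ)).2 (by simpa using hx)
    simp only [AffineMap.coe_neg, Pi.neg_apply, neg_lt_zero] at this
    exact this.ne'

def vertices (L : Set (E →ᵃ[ℝ] ℝ)) : Set E := {y | ∃ A ⊆ L, {z | ∀ ℓ ∈ A, ℓ z = 0} = {y}}

/- If some `z ≠ y` were a common zero of the constraints active at `y`, then `y` would be the
midpoint of two points of the polyhedron on the line through `y` and `z`. -/
theorem extremePoints_polyhedron_subset_vertices (hL : L.Finite) :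
    (polyhedron L).extremePoints ℝ ⊆ vertices L := by
  intro y hy
  refine ⟨{ℓ ∈ L | ℓ y = 0}, sep_subset _ _,
    eq_singleton_iff_unique_mem.2 ⟨fun ℓ hℓ => hℓ.2, fun z hz => ?_⟩⟩
  have hnear : ∀ᶠ t in 𝓝 (0 : ℝ), AffineMap.lineMap y z t ∈ polyhedron L := by
    refine (eventually_all_finite hL).2 fun ℓ hℓ => ?_
    simp only [AffineMap.apply_lineMap]
    rcases (hy.1 ℓ hℓ).lt_or_eq with hneg | hzero
    · refine (AffineMap.lineMap_continuous.continuousAt.eventually_lt continuousAt_const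
        ?_).mono fun _ h => h.le
      simpa using hneg
    · simp [hzero, hz ℓ ⟨hℓ, hzero⟩]
  have hnear' : ∀ᶠ t in 𝓝[>] (0 : ℝ), 0 < t ∧ AffineMap.lineMap y z t ∈ polyhedron L ∧
      AffineMap.lineMap y z (-t) ∈ polyhedron L :=
    (eventually_mem_nhdsWithin (a := (0 : ℝ)) (s := Ioi 0)).and
      (nhdsWithin_le_nhds (hnear.and ((continuous_neg.tendsto' 0 0 neg_zero).eventually hnear)))
  obtain ⟨t, ht, hplus, hminus⟩ := hnear'.exists
  have hmid : y ∈ openSegment ℝ (AffineMap.lineMap y z t) (AffineMap.lineMap y z (-t)) :=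
    ⟨1 / 2, 1 / 2, by norm_num, by norm_num, by norm_num, by
      simp only [AffineMap.lineMap_apply_module']; module⟩
  have := hy.2 hplus hminus hmid
  exact ((AffineMap.lineMap_eq_left_iff.1 this).resolve_right ht.ne').symm

theorem vertices_mono {L' : Set (E →ᵃ[ℝ] ℝ)} (h : L ⊆ L') : vertices L ⊆ vertices L' :=
  fun _ ⟨A, hA, hy⟩ => ⟨A, hA.trans h, hy⟩

theorem vertices_finite (hL : L.Finite) : (vertices L).Finite := by
  refine (hL.finite_subsets.biUnion fun A _ =>
    (?_ : {y : E | {z | ∀ ℓ ∈ A, ℓ z = 0} = {y}}.Subsingleton).finite).subset ?_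
  · intro y hy y' hy'
    exact singleton_injective (hy.symm.trans hy')
  · rintro y ⟨A, hA, hy⟩
    exact mem_biUnion hA hy

end Polyhedron

section Selection

variable {X Y ι : Type*} [TopologicalSpace X] [TopologicalSpace Y] [T2Space Y] [Finite ι]

theorem IsPreconnected.exists_eqOn_of_forall_exists_eq {K s : Set X} (hs : IsPreconnected s)
    (hK : IsClosed K) (hsK : s ⊆ K) {f : X → Y} {φ : ι → X → Y} (hf : ContinuousOn f K)
    (hφ : ∀ j, ContinuousOn (φ j) K) (hcover : ∀ y ∈ s, ∃ j, f y = φ j y)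
    (hdich : ∀ j j', EqOn (φ j) (φ j') s ∨ ∀ y ∈ s, φ j y ≠ φ j' y)
    {x : X} (hx : x ∈ s) : ∃ j, EqOn f (φ j) s := by
  obtain ⟨j₀, hj₀⟩ := hcover x hx
  let piece (j : ι) : Set X := {y ∈ K | f y = φ j y}
  have hclosed (j : ι) : IsClosed (piece j) := hK.isClosed_eq hf (hφ j)
  let others : Set X := ⋃ j ∈ {j | ¬EqOn (φ j) (φ j₀) s}, piece j
  have hothers : IsClosed others := (Set.toFinite _).isClosed_biUnion fun j _ => hclosed j
  have hdisj : s ∩ (piece j₀ ∩ others) = ∅ := by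
    refine eq_empty_iff_forall_notMem.2 fun y ⟨hys, ⟨_, hy₀⟩, hy⟩ => ?_
    obtain ⟨j, hj, -, hyj⟩ := mem_iUnion₂.1 hy
    exact (hdich j j₀).elim hj fun hne => hne y hys (hyj ▸ hy₀)
  have hcov : s ⊆ piece j₀ ∪ others := by
    intro y hy
    obtain ⟨j, hj⟩ := hcover y hy
    by_cases hjj₀ : EqOn (φ j) (φ j₀) s
    · exact Or.inl ⟨hsK hy, hj.trans (hjj₀ hy)⟩
    · exact Or.inr (mem_iUnion₂.2 ⟨j, hjj₀, hsK hy, hj⟩)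
  refine ⟨j₀, fun y hy => ?_⟩
  rcases isPreconnected_iff_subset_of_disjoint_closed.1 hs _ _ (hclosed j₀) hothers hcov hdisj
    with h | h
  · exact (h hy).2
  · exact absurd hdisj (nonempty_iff_ne_empty.1 ⟨x, hx, ⟨hsK hx, hj₀⟩, h hx⟩)

end Selection

section LocallyConvex

variable {E : Type*} [AddCommGroup E] [Module ℝ E] [TopologicalSpace E] [T2Space E]
  [IsTopologicalAddGroup E] [ContinuousSMul ℝ E] [LocallyConvexSpace ℝ E]

theorem polyhedron_subset_convexHull {L : Set (E →ᵃ[ℝ] ℝ)} (hL : L.Finite)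
    (hc : IsCompact (polyhedron L)) :
    polyhedron L ⊆ convexHull ℝ (polyhedron L ∩ vertices L) := by
  have hfin : (polyhedron L ∩ vertices L).Finite := (vertices_finite hL).inter_of_right _
  calc polyhedron L = closure (convexHull ℝ ((polyhedron L).extremePoints ℝ)) :=
        (closure_convexHull_extremePoints hc (convex_polyhedron L)).symm
    _ ⊆ closure (convexHull ℝ (polyhedron L ∩ vertices L)) :=
        closure_mono <| convexHull_mono <| subset_inter (extremePoints_subset)
          (extremePoints_polyhedron_subset_vertices hL)
    _ = convexHull ℝ (polyhedron L ∩ vertices L) := (hfin.isClosed_convexHull ℝ).closure_eq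

theorem le_on_polyhedron_of_le_on_vertices {L : Set (E →ᵃ[ℝ] ℝ)} (hL : L.Finite)
    (hc : IsCompact (polyhedron L)) {φ ψ : E →ᵃ[ℝ] ℝ}
    (h : ∀ v ∈ polyhedron L ∩ vertices L, φ v ≤ ψ v) : ∀ y ∈ polyhedron L, φ y ≤ ψ y := by
  have hconv : Convex ℝ {y | φ y ≤ ψ y} := by
    have : {y | φ y ≤ ψ y} = (φ - ψ) ⁻¹' Iic 0 := by
      ext y
      simp
    exact this ▸ (convex_Iic 0).affine_preimage _
  exact fun y hy => convexHull_min h hconv (polyhedron_subset_convexHull hL hc hy)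

end LocallyConvex

section FiniteDimensional

variable {E : Type*} [NormedAddCommGroup E] [NormedSpace ℝ E] [FiniteDimensional ℝ E]

theorem isClosed_polyhedron (L : Set (E →ᵃ[ℝ] ℝ)) : IsClosed (polyhedron L) := by
  simp only [polyhedron, ofPred_forall]
  exact isClosed_biInter fun ℓ _ => isClosed_le ℓ.continuous_of_finiteDimensional continuous_const

theorem exists_eqOn_cell {ι : Type*} [Finite ι] {L : Set (E →ᵃ[ℝ] ℝ)} (hL : ∀ ℓ ∈ L, -ℓ ∈ L)
    {K : Set E} (hK : IsClosed K) {x : E} (hxK : cell L x ⊆ K) {f : E → ℝ}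
    (hf : ContinuousOn f K) {φ : ι → E →ᵃ[ℝ] ℝ} (hφ : ∀ y ∈ K, ∃ j, f y = φ j y)
    (hφL : ∀ j j', φ j - φ j' ∈ L) : ∃ j, EqOn f (φ j) (cell L x) := by
  have hopen : openCell L x ⊆ K := openCell_subset_cell.trans hxK
  have hcont (j : ι) : ContinuousOn (φ j) K := (φ j).continuous_of_finiteDimensional.continuousOn
  have hdich (j j' : ι) : EqOn (φ j) (φ j') (openCell L x) ∨
      ∀ y ∈ openCell L x, φ j y ≠ φ j' y :=
    (forall_eq_zero_or_forall_ne_zero_on_openCell hL (hφL j j')).imp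
      (fun h y hy => sub_eq_zero.1 (h y hy)) (fun h y hy => sub_ne_zero.1 (h y hy))
  obtain ⟨j, hj⟩ := convex_openCell.isPreconnected.exists_eqOn_of_forall_exists_eq hK hopen hf
    hcont (fun y hy => hφ y (hopen hy)) hdich mem_openCell_self
  refine ⟨j, fun y hy => ?_⟩
  have hsub : openCell L x ⊆ {z ∈ K | f z = φ j z} := fun z hz => ⟨hopen hz, hj hz⟩
  exact (closure_minimal hsub (hK.isClosed_eq hf (hcont j)) (cell_subset_closure_openCell hy)).2

theorem exists_le_mul_of_piecewiseAffine {LK : Set (E →ᵃ[ℝ] ℝ)} (hLK : LK.Finite)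
    (hK : IsCompact (polyhedron LK)) {ι κ : Type*} [Finite ι] [Finite κ] {f g : E → ℝ}
    {φ : ι → E →ᵃ[ℝ] ℝ} {ψ : κ → E →ᵃ[ℝ] ℝ} (hf : ContinuousOn f (polyhedron LK))
    (hg : ContinuousOn g (polyhedron LK)) (hfφ : ∀ y ∈ polyhedron LK, ∃ j, f y = φ j y)
    (hgψ : ∀ y ∈ polyhedron LK, ∃ j, g y = ψ j y) (hf₀ : ∀ y ∈ polyhedron LK, 0 ≤ f y)
    (hzero : ∀ y ∈ polyhedron LK, f y = 0 → g y = 0) :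
    ∃ C : ℝ, ∀ y ∈ polyhedron LK, g y ≤ C * f y := by
  set K := polyhedron LK
  set L₀ : Set (E →ᵃ[ℝ] ℝ) := LK ∪ range (fun p : ι × ι => φ p.1 - φ p.2) ∪
    range (fun p : κ × κ => ψ p.1 - ψ p.2)
  set L := L₀ ∪ -L₀
  have hL₀ : L₀.Finite := (hLK.union (finite_range _)).union (finite_range _)
  have hL : L.Finite := hL₀.union hL₀.neg
  have hLneg : ∀ ℓ ∈ L, -ℓ ∈ L := fun ℓ hℓ => by
    rcases hℓ with hℓ | hℓ
    · exact Or.inr (by simpa using hℓ)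
    · exact Or.inl hℓ
  have hV : (K ∩ vertices L).Finite := (vertices_finite hL).inter_of_right _
  obtain ⟨C, hC⟩ := (hV.image fun v => g v / f v).bddAbove
  have hvert : ∀ v ∈ K ∩ vertices L, g v ≤ C * f v := by
    intro v hv
    rcases (hf₀ v hv.1).eq_or_lt with h | h
    · simp [hzero v hv.1 h.symm, ← h]
    · exact (div_le_iff₀ h).1 (hC (mem_image_of_mem _ hv))
  refine ⟨C, fun x hx => ?_⟩
  have hcellK : cell L x ⊆ K := fun y hy ℓ hℓ =>
    hy ℓ ⟨Or.inl (Or.inl (Or.inl hℓ)), hx ℓ hℓ⟩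
  obtain ⟨j, hj⟩ := exists_eqOn_cell hLneg hK.isClosed hcellK hf hfφ
    fun j j' => Or.inl (Or.inl (Or.inr ⟨(j, j'), rfl⟩))
  obtain ⟨l, hl⟩ := exists_eqOn_cell hLneg hK.isClosed hcellK hg hgψ
    fun j j' => Or.inl (Or.inr ⟨(j, j'), rfl⟩)
  have hcell := le_on_polyhedron_of_le_on_vertices (φ := ψ l) (ψ := C • φ j)
    (hL.subset (sep_subset _ _)) (hK.of_isClosed_subset (isClosed_polyhedron _) hcellK)
    fun v ⟨hv, hvV⟩ => by
      simpa [← hj hv, ← hl hv] using hvert v ⟨hcellK hv, vertices_mono (sep_subset _ _) hvV⟩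
  simpa [hj mem_cell_self, hl mem_cell_self] using hcell x mem_cell_self

end FiniteDimensional

section Cube

variable {n : ℕ}

def cubeConstraints (n : ℕ) : Set ((Fin n → ℝ) →ᵃ[ℝ] ℝ) :=
  range (fun i => (LinearMap.proj i : (Fin n → ℝ) →ₗ[ℝ] ℝ).toAffineMap - AffineMap.const ℝ _ 1) ∪
    range (fun i => -(LinearMap.proj i : (Fin n → ℝ) →ₗ[ℝ] ℝ).toAffineMap)

theorem cubeConstraints_finite : (cubeConstraints n).Finite :=
  (finite_range _).union (finite_range _)

theorem cube_eq_polyhedron : Cube n = polyhedron (cubeConstraints n) := by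
  ext y
  simp [Cube, polyhedron, cubeConstraints, forall_and, or_imp, and_comm]

theorem isCompact_cube : IsCompact (Cube n) := by
  have : Cube n = Icc 0 1 := by ext; simp [Cube, Pi.le_def, forall_and]
  exact this ▸ isCompact_Icc

def affineOfCoeffs (c : ℝ) (a : Fin n → ℝ) : (Fin n → ℝ) →ᵃ[ℝ] ℝ :=
  (∑ i, a i • (LinearMap.proj i : (Fin n → ℝ) →ₗ[ℝ] ℝ)).toAffineMap + AffineMap.const ℝ _ c

theorem affineOfCoeffs_apply (c : ℝ) (a y : Fin n → ℝ) :
    affineOfCoeffs c a y = c + ∑ i, a i * y i := by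
  simp [affineOfCoeffs, add_comm]

theorem IsPWLQ.continuousOn_extend {f : Cube n → ℝ} (hf : IsPWLQ f) :
    ContinuousOn (Function.extend Subtype.val f 0) (Cube n) := by
  rw [continuousOn_iff_continuous_domRestrict]
  convert hf.1 using 1
  ext x
  exact Subtype.val_injective.extend_apply f 0 x

theorem IsPWLQ.exists_affine_pieces {f : Cube n → ℝ} (hf : IsPWLQ f) :
    ∃ (k : ℕ) (φ : Fin k → (Fin n → ℝ) →ᵃ[ℝ] ℝ),
      ∀ y ∈ Cube n, ∃ j, Function.extend Subtype.val f 0 y = φ j y := by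
  obtain ⟨-, -, k, c, a, h⟩ := hf
  refine ⟨k, fun j => affineOfCoeffs (c j) fun i => a j i, fun y hy => ?_⟩
  obtain ⟨j, hj⟩ := h ⟨y, hy⟩
  refine ⟨j, ?_⟩
  rw [affineOfCoeffs_apply, ← hj]
  exact Subtype.val_injective.extend_apply f 0 ⟨y, hy⟩

theorem IsPWLQ.exists_le_nat_mul {f g : Cube n → ℝ} (hf : IsPWLQ f) (hg : IsPWLQ g)
    (hzero : ∀ x, f x = 0 → g x = 0) : ∃ k : ℕ, ∀ x, g x ≤ k * f x := by
  obtain ⟨kf, φ, hφ⟩ := hf.exists_affine_pieces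
  obtain ⟨kg, ψ, hψ⟩ := hg.exists_affine_pieces
  have hFc := hf.continuousOn_extend
  have hGc := hg.continuousOn_extend
  have hF (x : Cube n) : Function.extend Subtype.val f 0 x = f x :=
    Subtype.val_injective.extend_apply f 0 x
  have hG (x : Cube n) : Function.extend Subtype.val g 0 x = g x :=
    Subtype.val_injective.extend_apply g 0 x
  -- so that the functions no longer mention `Cube n`, which is then rewritten to a polyhedron
  generalize Function.extend Subtype.val f 0 = F at *
  generalize Function.extend Subtype.val g 0 = G at *
  have hF₀ : ∀ y ∈ Cube n, 0 ≤ F y := fun y hy => hF ⟨y, hy⟩ ▸ (hf.2.1 _).1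
  have hFG : ∀ y ∈ Cube n, F y = 0 → G y = 0 := fun y hy h0 =>
    hG ⟨y, hy⟩ ▸ hzero _ (hF ⟨y, hy⟩ ▸ h0)
  have hK := isCompact_cube (n := n)
  rw [cube_eq_polyhedron] at hK hFc hGc hφ hψ hF₀ hFG
  obtain ⟨C, hC⟩ := exists_le_mul_of_piecewiseAffine cubeConstraints_finite hK hFc hGc hφ hψ hF₀ hFG
  obtain ⟨k, hk⟩ := exists_nat_ge C
  refine ⟨k, fun x => ?_⟩
  have := hC x (cube_eq_polyhedron ▸ x.2)
  rw [hF, hG] at this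
  exact this.trans (mul_le_mul_of_nonneg_right hk (hf.2.1 x).1)

end Cube

section FreeDMV

variable {n : ℕ}

theorem IsPWLQ.of_pieces {ι : Type*} [Fintype ι] {f : Cube n → ℝ} (hc : Continuous f)
    (hb : ∀ x, 0 ≤ f x ∧ f x ≤ 1) (c : ι → ℚ) (a : ι → Fin n → ℚ)
    (h : ∀ x : Cube n, ∃ j, f x = c j + ∑ i, (a j i : ℝ) * (x : Fin n → ℝ) i) : IsPWLQ f := by
  let e := Fintype.equivFin ι
  refine ⟨hc, hb, Fintype.card ι, c ∘ e.symm, a ∘ e.symm, fun x => ?_⟩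
  obtain ⟨j, hj⟩ := h x
  exact ⟨e j, by simpa using hj⟩

theorem isPWLQ_zero : IsPWLQ fun _ : Cube n => (0 : ℝ) :=
  .of_pieces continuous_const (fun _ => ⟨le_rfl, zero_le_one⟩) (fun _ : Unit => 0)
    (fun _ _ => 0) fun _ => ⟨(), by simp⟩

theorem IsPWLQ.one_sub {f : Cube n → ℝ} (hf : IsPWLQ f) : IsPWLQ fun x => 1 - f x := by
  obtain ⟨hc, hb, k, c, a, hp⟩ := hf
  refine .of_pieces (continuous_const.sub hc)
    (fun x => ⟨by linarith [(hb x).2], by linarith [(hb x).1]⟩) (fun j => 1 - c j)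
    (fun j i => -a j i) fun x => ?_
  obtain ⟨j, hj⟩ := hp x
  exact ⟨j, by simp [hj, Finset.sum_neg_distrib]; ring⟩

theorem IsPWLQ.min_add_one {f g : Cube n → ℝ} (hf : IsPWLQ f) (hg : IsPWLQ g) :
    IsPWLQ fun x => min (f x + g x) 1 := by
  obtain ⟨hfc, hfb, kf, cf, af, hfp⟩ := hf
  obtain ⟨hgc, hgb, kg, cg, ag, hgp⟩ := hg
  refine .of_pieces ((hfc.add hgc).min continuous_const)
    (fun x => ⟨le_min (add_nonneg (hfb x).1 (hgb x).1) zero_le_one, min_le_right _ _⟩)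
    (fun j : Option (Fin kf × Fin kg) => j.elim 1 fun p => cf p.1 + cg p.2)
    (fun j i => j.elim 0 fun p => af p.1 i + ag p.2 i) fun x => ?_
  obtain ⟨jf, hjf⟩ := hfp x
  obtain ⟨jg, hjg⟩ := hgp x
  rcases le_or_gt (f x + g x) 1 with hle | hlt
  · refine ⟨some (jf, jg), ?_⟩
    rw [min_eq_left hle, hjf, hjg]
    simp [add_mul, Finset.sum_add_distrib]
    ring
  · exact ⟨none, by simp [min_eq_right hlt.le]⟩

/-- The free DMV-algebra `DMV_n`. -/
abbrev FreeDMV (n : ℕ) := {f : Cube n → ℝ // IsPWLQ f}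

namespace FreeDMV

def zero : FreeDMV n := ⟨fun _ => 0, isPWLQ_zero⟩

def star (F : FreeDMV n) : FreeDMV n := ⟨fun x => 1 - F.1 x, F.2.one_sub⟩

def oplus (F G : FreeDMV n) : FreeDMV n := ⟨fun x => min (F.1 x + G.1 x) 1, F.2.min_add_one G.2⟩

def nmul : ℕ → FreeDMV n → FreeDMV n
  | 0, _ => zero
  | k + 1, F => oplus (nmul k F) F

theorem nmul_apply (k : ℕ) (F : FreeDMV n) (x : Cube n) :
    (nmul k F).1 x = min (k * F.1 x) 1 := by
  induction k with
  | zero => simp [nmul, zero]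
  | succ k ih =>
    simp only [nmul, oplus, ih, Nat.cast_succ]
    have := (F.2.2.1 x).1
    rcases le_total (k * F.1 x) 1 with h | h
    · rw [min_eq_left h, add_mul, one_mul]
    · rw [min_eq_right h, min_eq_right (by linarith), min_eq_right (by nlinarith)]

end FreeDMV

theorem IsIdealQ.nmul_mem {J : Set (Cube n → ℝ)} (hJ : IsIdealQ J) {F : FreeDMV n} (hF : F.1 ∈ J)
    (k : ℕ) : (FreeDMV.nmul k F).1 ∈ J := by
  induction k with
  | zero => exact hJ.2.1
  | succ k ih => exact hJ.2.2.2 _ ih _ hF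

theorem memGen_of_le_nat_mul {f₀ g : Cube n → ℝ} (hf₀ : IsPWLQ f₀) (hg : IsPWLQ g) {k : ℕ}
    (hk : ∀ x, g x ≤ k * f₀ x) : memGen f₀ g := fun J hJ hf₀J =>
  hJ.2.2.1 _ (hJ.nmul_mem (F := ⟨f₀, hf₀⟩) hf₀J k) g hg fun x => by
    rw [FreeDMV.nmul_apply]
    exact le_min (hk x) (hg.2.1 x).2

theorem memGen_zero (f₀ : Cube n → ℝ) : memGen f₀ fun _ => 0 := fun _ hJ _ => hJ.2.1

theorem memGen.apply_eq_zero {f₀ w : Cube n → ℝ} (hw : memGen f₀ w) (hf₀ : IsPWLQ f₀)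
    {p : Cube n} (hp : f₀ p = 0) : w p = 0 := by
  have hJ : IsIdealQ {h : Cube n → ℝ | IsPWLQ h ∧ h p = 0} := by
    refine ⟨fun f hf => hf.1, ⟨isPWLQ_zero, rfl⟩, ?_, ?_⟩
    · rintro f ⟨-, hfp⟩ g hg hle
      exact ⟨hg, le_antisymm (hfp ▸ hle p) (hg.2.1 p).1⟩
    · rintro f ⟨hf, hfp⟩ g ⟨hg, hgp⟩
      exact ⟨hf.min_add_one hg, by simp [hfp, hgp]⟩
  exact (hw _ hJ ⟨hf₀, hp⟩).2

end FreeDMV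

namespace IsQuotientByIdeal

variable {n : ℕ} {J : Set (Cube n → ℝ)} {D : Type} [DMVAlgebra D] {π : FreeDMV n → D}

theorem map_star (hπ : IsQuotientByIdeal J D π) (F : FreeDMV n) :
    π (FreeDMV.star F) = MVAlgebra.star (π F) :=
  hπ.2.2.1 F _ fun _ => rfl

theorem map_oplus (hπ : IsQuotientByIdeal J D π) (F G : FreeDMV n) :
    π (FreeDMV.oplus F G) = MVAlgebra.oplus (π F) (π G) :=
  hπ.2.1 F G _ fun _ => rfl

theorem map_zero (hπ : IsQuotientByIdeal J D π) (hJ : (fun _ => 0) ∈ J) :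
    π FreeDMV.zero = MVAlgebra.zero :=
  (hπ.2.2.2.2 _).2 hJ

theorem map_nmul (hπ : IsQuotientByIdeal J D π) (hJ : (fun _ => 0) ∈ J) (k : ℕ)
    (F : FreeDMV n) : π (FreeDMV.nmul k F) = MVAlgebra.nmul k (π F) := by
  induction k with
  | zero => exact hπ.map_zero hJ
  | succ k ih => rw [FreeDMV.nmul, hπ.map_oplus, ih, MVAlgebra.nmul]

theorem map_star_zero (hπ : IsQuotientByIdeal J D π) (hJ : (fun _ => 0) ∈ J) :
    π (FreeDMV.star FreeDMV.zero) = MVAlgebra.star MVAlgebra.zero := by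
  rw [hπ.map_star, hπ.map_zero hJ]

theorem le_iff (hπ : IsQuotientByIdeal J D π) (F G : FreeDMV n) :
    MVAlgebra.le (π F) (π G) ↔ (FreeDMV.star (FreeDMV.oplus (FreeDMV.star F) G)).1 ∈ J := by
  rw [← hπ.2.2.2.2, hπ.map_star, hπ.map_oplus, hπ.map_star, MVAlgebra.le, MVAlgebra.odot,
    MVAlgebra.star_star]

end IsQuotientByIdeal

def maxIdealAt {n : ℕ} {D : Type} (π : FreeDMV n → D) (p : Cube n) : Set D :=
  π '' {F | F.1 p = 0}

section Presentation

variable {n : ℕ} {f₀ : Cube n → ℝ} {D : Type} [DMVAlgebra D] {π : FreeDMV n → D}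
  (hπ : IsQuotientByIdeal {g | memGen f₀ g} D π) (hf₀ : IsPWLQ f₀) {p : Cube n} (hp : f₀ p = 0)
include hπ hf₀ hp

theorem apply_le_of_le {F G : FreeDMV n} (h : MVAlgebra.le (π F) (π G)) : F.1 p ≤ G.1 p := by
  have h0 := ((hπ.le_iff F G).1 h).apply_eq_zero hf₀ hp
  simp only [FreeDMV.star, FreeDMV.oplus] at h0
  linarith [min_le_left (1 - F.1 p + G.1 p) 1]

theorem isMVIdeal_maxIdealAt : IsMVIdeal (maxIdealAt π p) := by
  refine ⟨⟨FreeDMV.zero, rfl, hπ.map_zero (memGen_zero f₀)⟩, ?_, ?_⟩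
  · rintro _ ⟨F, hFp, rfl⟩ y hyF
    obtain ⟨G, rfl⟩ := hπ.1 y
    exact ⟨G, le_antisymm (hFp ▸ apply_le_of_le hπ hf₀ hp hyF) (G.2.2.1 p).1, rfl⟩
  · rintro _ ⟨F, hFp, rfl⟩ _ ⟨G, hGp, rfl⟩
    exact ⟨FreeDMV.oplus F G, by simp [FreeDMV.oplus, show F.1 p = 0 from hFp,
      show G.1 p = 0 from hGp], hπ.map_oplus F G⟩

theorem star_zero_notMem_maxIdealAt : MVAlgebra.star MVAlgebra.zero ∉ maxIdealAt π p := by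
  rintro ⟨F, hFp, hF⟩
  have hle : MVAlgebra.le (π (FreeDMV.star FreeDMV.zero)) (π F) := by
    rw [hπ.map_star_zero (memGen_zero f₀), ← hF]
    exact MVAlgebra.le_refl _
  have := apply_le_of_le hπ hf₀ hp hle
  norm_num [FreeDMV.star, FreeDMV.zero, show F.1 p = 0 from hFp] at this

theorem isMaximalMVIdeal_maxIdealAt : IsMaximalMVIdeal (maxIdealAt π p) := by
  refine ⟨isMVIdeal_maxIdealAt hπ hf₀ hp,
    fun huniv => star_zero_notMem_maxIdealAt hπ hf₀ hp (huniv ▸ mem_univ _),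
    fun I hI hIuniv hMI => Subset.antisymm (fun y hy => ?_) hMI⟩
  obtain ⟨G, rfl⟩ := hπ.1 y
  by_contra hG
  have hGp : 0 < G.1 p := (G.2.2.1 p).1.lt_of_ne fun h => hG ⟨G, h.symm, rfl⟩
  obtain ⟨m, hm⟩ := exists_nat_gt (1 / G.1 p)
  have hm1 : 1 ≤ m * G.1 p := by rw [div_lt_iff₀ hGp] at hm; exact hm.le
  -- `1 - min (m G) 1` vanishes at `p`, and its `⊕` with `m G` is the constant `1`.
  have hW : π (FreeDMV.star (FreeDMV.nmul m G)) ∈ I :=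
    hMI ⟨_, by simp [FreeDMV.star, FreeDMV.nmul_apply, min_eq_right hm1], rfl⟩
  have hsum : FreeDMV.oplus (FreeDMV.star (FreeDMV.nmul m G)) (FreeDMV.nmul m G) =
      FreeDMV.star FreeDMV.zero := by
    ext x
    simp [FreeDMV.oplus, FreeDMV.star, FreeDMV.zero]
  have h1 := hI.2.2 _ hW _ (hπ.map_nmul (memGen_zero f₀) m G ▸ hI.nmul_mem hy m)
  rw [← hπ.map_oplus, hsum, hπ.map_star_zero (memGen_zero f₀)] at h1
  exact hIuniv (hI.eq_univ_of_one_mem h1)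

end Presentation

/-- Every finitely presented DMV-algebra is semisimple: if `D` is the
quotient of a free finitely generated DMV-algebra `DMV_n` by a principal ideal `(f₀]`,
then `D` is semisimple. -/
theorem finitely_presented_dmv_semisimple (n : ℕ)
    (f₀ : Cube n → ℝ) (hf₀ : IsPWLQ f₀)
    (D : Type) [DMVAlgebra D]
    (π : {f : Cube n → ℝ // IsPWLQ f} → D)
    (hπ : IsQuotientByIdeal {g | memGen f₀ g} D π) :
    IsSemisimple D := by
  intro x hx
  obtain ⟨G, rfl⟩ := hπ.1 x
  have hG : ∀ p, f₀ p = 0 → G.1 p = 0 := fun p hp => by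
    obtain ⟨F, hFp, hF⟩ := hx _ (isMaximalMVIdeal_maxIdealAt hπ hf₀ hp)
    have hGF : G.1 p ≤ F.1 p := apply_le_of_le hπ hf₀ hp (hF ▸ MVAlgebra.le_refl (π F))
    exact le_antisymm (hFp ▸ hGF) (G.2.2.1 p).1
  obtain ⟨k, hk⟩ := hf₀.exists_le_nat_mul G.2 hG
  exact (hπ.2.2.2.2 G).2 (memGen_of_le_nat_mul hf₀ G.2 hk)
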